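/- Let X have i.i.d. N(0,1) entries of size n×p with p ≤ n^A for a constant A. Then with probability at least 1 − C/p, the empirical coherence τ_n = max_{ℓ≠m} |(1/n)∑ᵢ X̃_{iℓ}X̃_{im}| of the normalized columns X̃_ℓ = X_ℓ/σ_ℓ (σ_ℓ² = (1/n)∑ᵢX²_{iℓ}) satisfies τ_n ≤ C'√(log p / n) for constants C, C' depending on A. -/

import Mathlib

/-!
Write `S_{ℓm} = ∑ᵢ X_{iℓ} X_{im}` and `q = √(log p / n)`. The normalized inner product of columns
`ℓ ≠ m` equals `S_{ℓm} / (√(∑ᵢ X_{iℓ}²) √(∑ᵢ X_{im}²))`, so it is at most `8q` as soon as every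
column has `∑ᵢ X_{iℓ}² > n/2` and every pair has `|S_{ℓm}| < 4qn`; it is always at most `1` by
Cauchy–Schwarz, which settles the case `8q ≥ 1`.

Both events are controlled by Chernoff bounds, using that the rows of an independent array are
independent. For a standard Gaussian `Y`, `E exp(-Y²) = 1/√3`, whence
`P(∑ᵢ X_{iℓ}² ≤ n/2) ≤ (√e/√3)ⁿ`. For independent standard Gaussians `Y, Z`,
`E exp(λYZ) = (1 - λ²)^(-1/2) ≤ exp λ²`, and `λ = 2q` gives `P(|S_{ℓm}| ≥ 4qn) ≤ 2 exp(-4q²n) = 2/p⁴`.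
A union bound over the `p` columns and `p²` pairs bounds the failure probability by
`p (√e/√3)ⁿ + 2/p²`, and `p ≤ n^A` makes `p² (√e/√3)ⁿ` bounded.
-/

open MeasureTheory ProbabilityTheory Finset Real

namespace ProbabilityTheory.iIndepFun

lemma curry {Ω ι κ 𝓧 : Type*} {mΩ : MeasurableSpace Ω}
    [MeasurableSpace 𝓧] {P : Measure Ω} {X : ι × κ → Ω → 𝓧} (mX : ∀ p, Measurable (X p))
    (h : iIndepFun X P) : iIndepFun (fun i ω j ↦ X (i, j) ω) P := by
  have := h.isProbabilityMeasure
  have : ∀ p, IsProbabilityMeasure (P.map (X p)) :=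
    fun p ↦ Measure.isProbabilityMeasure_map (mX p).aemeasurable
  have hsigma : iIndepFun (fun p : (_ : ι) × κ ↦ X (p.1, p.2)) P :=
    h.precomp (Equiv.sigmaEquivProd ι κ).injective
  have hrow (i : ι) : iIndepFun (fun j ↦ X (i, j)) P := h.precomp (Prod.mk_right_injective i)
  have hcurry : MeasurableEquiv.piCurry (fun _ _ ↦ 𝓧) ∘ (fun ω (p : (_ : ι) × κ) ↦ X (p.1, p.2) ω)
      = fun ω i j ↦ X (i, j) ω := by
    ext; simp [Sigma.curry]
  rw [iIndepFun_iff_map_fun_eq_infinitePi_map (by fun_prop), ← hcurry,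
    ← Measure.map_map (by fun_prop) (by fun_prop),
    (iIndepFun_iff_map_fun_eq_infinitePi_map (by fun_prop)).1 hsigma,
    Measure.infinitePi_map_piCurry (fun i j ↦ P.map (X (i, j)))]
  congrm Measure.infinitePi fun i ↦ ?_
  rw [(iIndepFun_iff_map_fun_eq_infinitePi_map (by fun_prop)).1 (hrow i)]

lemma comp_pair {Ω ι κ : Type*} {mΩ : MeasurableSpace Ω}
    {P : Measure Ω} {X : ι × κ → Ω → ℝ} (hXm : ∀ k, Measurable (X k)) (hX : iIndepFun X P)
    {g : ℝ → ℝ → ℝ} (hg : Measurable (Function.uncurry g)) (ℓ m : κ) :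
    iIndepFun (fun i ω ↦ g (X (i, ℓ) ω) (X (i, m) ω)) P :=
  (hX.curry hXm).comp (fun _ v ↦ g (v ℓ) (v m))
    fun _ ↦ hg.comp (f := fun v : κ → ℝ ↦ (v ℓ, v m)) (by fun_prop)

variable {Ω ι : Type*} {mΩ : MeasurableSpace Ω} {P : Measure Ω} [Fintype ι] {W : ι → Ω → ℝ}
  {t c : ℝ}

lemma mgf_sum_eq_pow (hW : iIndepFun W P) (hWm : ∀ i, Measurable (W i))
    (hc : ∀ i, mgf (W i) P t = c) :
    mgf (fun ω ↦ ∑ i, W i ω) P t = c ^ Fintype.card ι := by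
  have h := hW.mgf_sum hWm univ (t := t)
  simp only [hc, prod_const, card_univ] at h
  rw [← h]
  congr with ω
  simp

lemma measureReal_sum_ge_le (hW : iIndepFun W P) (hWm : ∀ i, Measurable (W i)) (ht : 0 ≤ t)
    (hint : ∀ i, Integrable (fun ω ↦ exp (t * W i ω)) P) (hc : ∀ i, mgf (W i) P t = c) (ε : ℝ) :
    P.real {ω | ε ≤ ∑ i, W i ω} ≤ exp (-t * ε) * c ^ Fintype.card ι := by
  have := hW.isProbabilityMeasure
  have hsum := hW.integrable_exp_mul_sum hWm (s := univ) fun i _ ↦ hint i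
  simp only [Finset.sum_apply] at hsum
  rw [← hW.mgf_sum_eq_pow hWm hc]
  exact measure_ge_le_exp_mul_mgf ε ht hsum

lemma measureReal_sum_le_le (hW : iIndepFun W P) (hWm : ∀ i, Measurable (W i)) (ht : t ≤ 0)
    (hint : ∀ i, Integrable (fun ω ↦ exp (t * W i ω)) P) (hc : ∀ i, mgf (W i) P t = c) (ε : ℝ) :
    P.real {ω | ∑ i, W i ω ≤ ε} ≤ exp (-t * ε) * c ^ Fintype.card ι := by
  have := hW.isProbabilityMeasure
  have hsum := hW.integrable_exp_mul_sum hWm (s := univ) fun i _ ↦ hint i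
  simp only [Finset.sum_apply] at hsum
  rw [← hW.mgf_sum_eq_pow hWm hc]
  exact measure_le_le_exp_mul_mgf ε ht hsum

end ProbabilityTheory.iIndepFun

lemma one_sub_probReal_compl_le {Ω : Type*} {mΩ : MeasurableSpace Ω} {P : Measure Ω}
    [IsProbabilityMeasure P] (s : Set Ω) : 1 - P.real sᶜ ≤ P.real s := by
  have h := measureReal_union_le (μ := P) s sᶜ
  rw [Set.union_compl_self, probReal_univ] at h
  linarith

section Gaussian

-- For `s ≥ 1/2` both sides are `0`, since `√x = 0` for `x ≤ 0` and `0⁻¹ = 0`.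
lemma integral_exp_mul_sq_gaussianReal (s : ℝ) :
    ∫ x, exp (s * x ^ 2) ∂gaussianReal 0 1 = (√(1 - 2 * s))⁻¹ := by
  have hpdf (x : ℝ) : gaussianPDFReal 0 1 x • exp (s * x ^ 2)
      = (√(2 * π))⁻¹ * exp (-(1 / 2 - s) * x ^ 2) := by
    rw [gaussianPDFReal, smul_eq_mul, mul_assoc, ← exp_add]
    congr 2
    · simp
    · simp only [NNReal.coe_one]; ring
  simp_rw [integral_gaussianReal_eq_integral_smul one_ne_zero, hpdf, integral_const_mul,
    integral_gaussian]
  rw [← sqrt_inv, ← sqrt_mul (by positivity), ← sqrt_inv]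
  congr 1
  field_simp

lemma integrable_exp_mul_sq_gaussianReal {s : ℝ} (hs : s < 1 / 2) :
    Integrable (fun x ↦ exp (s * x ^ 2)) (gaussianReal 0 1) :=
  .of_integral_ne_zero <| by
    rw [integral_exp_mul_sq_gaussianReal s]; exact inv_ne_zero (sqrt_pos.2 (by linarith)).ne'

lemma integral_exp_mul_mul_gaussianReal (l x : ℝ) :
    ∫ y, exp (l * (x * y)) ∂gaussianReal 0 1 = exp (l ^ 2 / 2 * x ^ 2) := by
  have h := congrFun (mgf_fun_id_gaussianReal (μ := 0) (v := 1)) (l * x)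
  simp only [mgf, mul_assoc] at h
  rw [h]
  congr 1
  push_cast
  ring

lemma integrable_exp_mul_mul_gaussianReal_prod {l : ℝ} (hl : l ^ 2 < 1) :
    Integrable (fun q : ℝ × ℝ ↦ exp (l * (q.1 * q.2)))
      ((gaussianReal 0 1).prod (gaussianReal 0 1)) := by
  refine (integrable_prod_iff (by fun_prop)).2 ⟨.of_forall fun x ↦ ?_, ?_⟩
  · simpa only [mul_assoc] using integrable_exp_mul_gaussianReal (μ := 0) (v := 1) (l * x)
  · simp only [norm_of_nonneg (exp_pos _).le, integral_exp_mul_mul_gaussianReal]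
    exact integrable_exp_mul_sq_gaussianReal (by linarith)

lemma integral_exp_mul_mul_gaussianReal_prod {l : ℝ} (hl : l ^ 2 < 1) :
    ∫ q, exp (l * (q.1 * q.2)) ∂(gaussianReal 0 1).prod (gaussianReal 0 1)
      = (√(1 - l ^ 2))⁻¹ := by
  rw [integral_prod _ (integrable_exp_mul_mul_gaussianReal_prod hl)]
  simp only [integral_exp_mul_mul_gaussianReal]
  rw [integral_exp_mul_sq_gaussianReal]
  ring_nf

variable {Ω : Type*} {mΩ : MeasurableSpace Ω} {P : Measure Ω} {Y Z : Ω → ℝ}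

lemma mgf_sq_of_map_eq_gaussianReal (hY : P.map Y = gaussianReal 0 1) (hYm : Measurable Y)
    {s : ℝ} (hs : s < 1 / 2) :
    Integrable (fun ω ↦ exp (s * Y ω ^ 2)) P ∧
      mgf (fun ω ↦ Y ω ^ 2) P s = (√(1 - 2 * s))⁻¹ := by
  have hf : AEStronglyMeasurable (fun x : ℝ ↦ exp (s * x ^ 2)) (P.map Y) := by fun_prop
  refine ⟨(integrable_map_measure hf hYm.aemeasurable).1 ?_, ?_⟩
  · rw [hY]; exact integrable_exp_mul_sq_gaussianReal hs
  · rw [mgf, ← integral_map hYm.aemeasurable hf, hY, integral_exp_mul_sq_gaussianReal s]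

lemma mgf_mul_of_indepFun_gaussianReal [IsFiniteMeasure P] (hY : P.map Y = gaussianReal 0 1)
    (hZ : P.map Z = gaussianReal 0 1) (hYm : Measurable Y) (hZm : Measurable Z)
    (hYZ : IndepFun Y Z P) {l : ℝ} (hl : l ^ 2 < 1) :
    Integrable (fun ω ↦ exp (l * (Y ω * Z ω))) P ∧
      mgf (fun ω ↦ Y ω * Z ω) P l = (√(1 - l ^ 2))⁻¹ := by
  have hmap : P.map (fun ω ↦ (Y ω, Z ω)) = (gaussianReal 0 1).prod (gaussianReal 0 1) := by
    rw [(indepFun_iff_map_prod_eq_prod_map_map hYm.aemeasurable hZm.aemeasurable).1 hYZ, hY, hZ]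
  have hf : AEStronglyMeasurable (fun q : ℝ × ℝ ↦ exp (l * (q.1 * q.2)))
      (P.map fun ω ↦ (Y ω, Z ω)) := by fun_prop
  have hYZm : AEMeasurable (fun ω ↦ (Y ω, Z ω)) P := by fun_prop
  refine ⟨(integrable_map_measure hf hYZm).1 ?_, ?_⟩
  · rw [hmap]; exact integrable_exp_mul_mul_gaussianReal_prod hl
  · rw [mgf, ← integral_map hYZm hf, hmap, integral_exp_mul_mul_gaussianReal_prod hl]

end Gaussian

lemma inv_sqrt_one_sub_le_exp {x : ℝ} (hx0 : 0 ≤ x) (hx : x ≤ 1 / 2) :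
    (√(1 - x))⁻¹ ≤ exp x := by
  have hpos : 0 < √(1 - x) := sqrt_pos.2 (by linarith)
  have hexp : 1 + 2 * x ≤ exp x ^ 2 := by
    rw [← exp_nat_mul]; push_cast; linarith [add_one_le_exp (2 * x)]
  have hsq : 1 ≤ (exp x * √(1 - x)) ^ 2 := by
    rw [mul_pow, sq_sqrt (by linarith)]
    nlinarith
  rw [inv_le_iff_one_le_mul₀ hpos]
  nlinarith [mul_pos (exp_pos x) hpos]

lemma exp_half_div_sqrt_three_lt_one : exp (1 / 2) / √3 < 1 := by
  rw [div_lt_one (by positivity), lt_sqrt (exp_pos _).le, ← exp_nat_mul]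
  norm_num
  linarith [exp_one_lt_d9]

lemma exists_rpow_mul_pow_le (B : ℝ) {r : ℝ} (hr0 : 0 < r) (hr1 : r < 1) :
    ∃ M, ∀ n : ℕ, (n : ℝ) ^ B * r ^ n ≤ M := by
  have hlim := (tendsto_rpow_mul_exp_neg_mul_atTop_nhds_zero B (-log r)
    (neg_pos.2 (log_neg hr0 hr1))).comp tendsto_natCast_atTop_atTop
  obtain ⟨M, hM⟩ := hlim.bddAbove_range
  refine ⟨M, fun n ↦ le_of_eq_of_le ?_ (hM ⟨n, rfl⟩)⟩
  rw [Function.comp_apply, neg_neg, mul_comm, exp_mul, exp_log hr0, rpow_natCast, mul_comm]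

lemma mul_pow_add_two_div_sq_le {A M r : ℝ} {n p : ℕ} (hr : 0 ≤ r) (hp : 1 < p)
    (hpA : (p : ℝ) ≤ n ^ A) (hM : (n : ℝ) ^ (2 * A) * r ^ n ≤ M) :
    p * r ^ n + 2 / p ^ 2 ≤ (M + 2) / p := by
  have hp' : (1 : ℝ) < p := by exact_mod_cast hp
  have hp2 : (p : ℝ) ^ 2 ≤ (n : ℝ) ^ (2 * A) := by
    rw [mul_comm, rpow_mul n.cast_nonneg, rpow_two]
    gcongr
  have hgeom : p * r ^ n ≤ M / p := by
    rw [le_div_iff₀ (by positivity)]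
    nlinarith [pow_nonneg hr n]
  have hsq : 2 / (p : ℝ) ^ 2 ≤ 2 / p := by gcongr; nlinarith
  rw [add_div]
  linarith

-- The paper's `(1/n) ∑ᵢ X̃_{iℓ} X̃_{im}` with `X̃_ℓ = X_ℓ / σ_ℓ`, for the columns `a = X_ℓ`, `b = X_m`.
noncomputable def normalizedInner {n : ℕ} (a b : Fin n → ℝ) : ℝ :=
  (1 / (n : ℝ)) * ∑ i : Fin n,
    (a i / √((1 / (n : ℝ)) * ∑ j : Fin n, a j ^ 2)) *
    (b i / √((1 / (n : ℝ)) * ∑ j : Fin n, b j ^ 2))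

-- Also valid for a zero column, where both sides are `0`.
lemma normalizedInner_eq {n : ℕ} (hn : 0 < n) (a b : Fin n → ℝ) :
    normalizedInner a b = (∑ i, a i * b i) / (√(∑ i, a i ^ 2) * √(∑ i, b i ^ 2)) := by
  have hn' : (0 : ℝ) < n := by exact_mod_cast hn
  have hsqrt (c : Fin n → ℝ) : √((1 / (n : ℝ)) * ∑ j, c j ^ 2) = √(∑ j, c j ^ 2) / √n := by
    rw [one_div_mul_eq_div, sqrt_div' _ hn'.le]
  have hsq : √(n : ℝ) ^ 2 = n := sq_sqrt hn'.le
  rw [normalizedInner, hsqrt a, hsqrt b, Finset.mul_sum, Finset.sum_div]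
  refine Finset.sum_congr rfl fun i _ ↦ ?_
  rw [div_div_eq_mul_div, div_div_eq_mul_div]
  calc _ = a i * b i * (√(n : ℝ) ^ 2 / n) / (√(∑ j, a j ^ 2) * √(∑ j, b j ^ 2)) := by ring
    _ = _ := by rw [hsq, div_self hn'.ne', mul_one]

lemma abs_sum_mul_le_sqrt_mul_sqrt {ι : Type*} (s : Finset ι) (f g : ι → ℝ) :
    |∑ i ∈ s, f i * g i| ≤ √(∑ i ∈ s, f i ^ 2) * √(∑ i ∈ s, g i ^ 2) := by
  refine abs_le.2 ⟨?_, sum_mul_le_sqrt_mul_sqrt s f g⟩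
  exact neg_le.2 (by simpa using sum_mul_le_sqrt_mul_sqrt s (fun i ↦ -f i) g)

lemma abs_normalizedInner_le_one {n : ℕ} (hn : 0 < n) (a b : Fin n → ℝ) :
    |normalizedInner a b| ≤ 1 := by
  rw [normalizedInner_eq hn, abs_div, abs_of_nonneg (mul_nonneg (sqrt_nonneg _) (sqrt_nonneg _))]
  exact div_le_one_of_le₀ (abs_sum_mul_le_sqrt_mul_sqrt _ a b) (by positivity)

lemma abs_normalizedInner_le {n : ℕ} (hn : 0 < n) {a b : Fin n → ℝ} {ε : ℝ}
    (ha : n / 2 ≤ ∑ i, a i ^ 2) (hb : n / 2 ≤ ∑ i, b i ^ 2) (hab : |∑ i, a i * b i| ≤ ε * n) :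
    |normalizedInner a b| ≤ 2 * ε := by
  have hn' : (0 : ℝ) < n := by exact_mod_cast hn
  have hε : 0 ≤ ε := nonneg_of_mul_nonneg_left ((abs_nonneg _).trans hab) hn'
  have hden : (n : ℝ) / 2 ≤ √(∑ i, a i ^ 2) * √(∑ i, b i ^ 2) := by
    rw [← mul_self_sqrt (by positivity : (0 : ℝ) ≤ n / 2)]
    exact mul_le_mul (sqrt_le_sqrt ha) (sqrt_le_sqrt hb) (sqrt_nonneg _) (sqrt_nonneg _)
  rw [normalizedInner_eq hn, abs_div, abs_of_nonneg (mul_nonneg (sqrt_nonneg _) (sqrt_nonneg _)),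
    div_le_iff₀ ((half_pos hn').trans_le hden)]
  nlinarith

section GaussianDesign

variable {Ω : Type*} {mΩ : MeasurableSpace Ω} {P : Measure Ω} {n p : ℕ}
  {X : Fin n × Fin p → Ω → ℝ}

lemma measureReal_sum_sq_le_half_le (hXm : ∀ k, Measurable (X k)) (hX : iIndepFun X P)
    (hlaw : ∀ k, P.map (X k) = gaussianReal 0 1) (ℓ : Fin p) :
    P.real {ω | ∑ i, X (i, ℓ) ω ^ 2 ≤ n / 2} ≤ (exp (1 / 2) / √3) ^ n := by
  have hmgf (i : Fin n) := mgf_sq_of_map_eq_gaussianReal (hlaw (i, ℓ)) (hXm (i, ℓ))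
    (s := -1) (by norm_num)
  have h := (hX.comp_pair hXm (g := fun x _ ↦ x ^ 2) (by fun_prop) ℓ ℓ).measureReal_sum_le_le
    (fun i ↦ by fun_prop) (by norm_num) (fun i ↦ (hmgf i).1) (fun i ↦ (hmgf i).2) (n / 2)
  refine h.trans_eq ?_
  rw [Fintype.card_fin, div_pow, ← exp_nat_mul, div_eq_mul_inv _ (√3 ^ n), inv_pow]
  norm_num
  ring_nf

lemma measureReal_abs_sum_mul_ge_le (hXm : ∀ k, Measurable (X k)) (hX : iIndepFun X P)
    (hlaw : ∀ k, P.map (X k) = gaussianReal 0 1) {ℓ m : Fin p} (hℓm : ℓ ≠ m) {l : ℝ}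
    (hl0 : 0 ≤ l) (hl1 : l < 1) (ε : ℝ) :
    P.real {ω | ε ≤ |∑ i, X (i, ℓ) ω * X (i, m) ω|}
      ≤ 2 * (exp (-l * ε) * (√(1 - l ^ 2))⁻¹ ^ n) := by
  have := hX.isProbabilityMeasure
  have hW := hX.comp_pair hXm (g := fun x y ↦ x * y) (by fun_prop) ℓ m
  have hmgf (i : Fin n) {t : ℝ} (ht : t ^ 2 < 1) :=
    mgf_mul_of_indepFun_gaussianReal (hlaw (i, ℓ)) (hlaw (i, m)) (hXm (i, ℓ)) (hXm (i, m))
      (hX.indepFun (by simp [hℓm])) ht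
  have hl2 : l ^ 2 < 1 := by nlinarith
  have hupper := hW.measureReal_sum_ge_le (fun i ↦ by fun_prop) hl0
    (fun i ↦ (hmgf i hl2).1) (fun i ↦ (hmgf i hl2).2) ε
  have hlower := hW.measureReal_sum_le_le (fun i ↦ by fun_prop) (neg_nonpos.2 hl0)
    (fun i ↦ (hmgf i (by rwa [neg_sq])).1) (fun i ↦ (hmgf i (by rwa [neg_sq])).2) (-ε)
  rw [neg_sq, show -(-l) * -ε = -l * ε by ring] at hlower
  rw [Fintype.card_fin] at hupper hlower
  calc P.real {ω | ε ≤ |∑ i, X (i, ℓ) ω * X (i, m) ω|}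
      ≤ P.real ({ω | ε ≤ ∑ i, X (i, ℓ) ω * X (i, m) ω} ∪
          {ω | ∑ i, X (i, ℓ) ω * X (i, m) ω ≤ -ε}) :=
        measureReal_mono fun ω (hω : ε ≤ |_|) ↦ (le_abs'.1 hω).symm
    _ ≤ _ := (measureReal_union_le _ _).trans (by linarith)

lemma measureReal_abs_sum_mul_ge_le_exp (hXm : ∀ k, Measurable (X k)) (hX : iIndepFun X P)
    (hlaw : ∀ k, P.map (X k) = gaussianReal 0 1) {ℓ m : Fin p} (hℓm : ℓ ≠ m) {q : ℝ}
    (hq0 : 0 ≤ q) (hq : 8 * q ^ 2 ≤ 1) :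
    P.real {ω | 4 * q * n ≤ |∑ i, X (i, ℓ) ω * X (i, m) ω|} ≤ 2 * exp (-4 * q ^ 2 * n) := by
  refine (measureReal_abs_sum_mul_ge_le hXm hX hlaw hℓm (l := 2 * q) (by positivity)
    (by nlinarith) _).trans ?_
  have hexp : (√(1 - (2 * q) ^ 2))⁻¹ ^ n ≤ exp ((2 * q) ^ 2) ^ n :=
    pow_le_pow_left₀ (by positivity) (inv_sqrt_one_sub_le_exp (by positivity) (by nlinarith)) n
  calc 2 * (exp (-(2 * q) * (4 * q * n)) * (√(1 - (2 * q) ^ 2))⁻¹ ^ n)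
      ≤ 2 * (exp (-(2 * q) * (4 * q * n)) * exp ((2 * q) ^ 2) ^ n) := by gcongr
    _ = 2 * exp (-4 * q ^ 2 * n) := by
      rw [← exp_nat_mul, ← exp_add]
      ring_nf

lemma setOf_exists_abs_normalizedInner_gt_subset (hn : 0 < n) (q : ℝ) :
    {ω | ∃ ℓ m : Fin p, ℓ ≠ m ∧
        8 * q < |normalizedInner (fun i ↦ X (i, ℓ) ω) (fun i ↦ X (i, m) ω)|} ⊆
      (⋃ ℓ, {ω | ∑ i, X (i, ℓ) ω ^ 2 ≤ n / 2}) ∪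
        ⋃ k ∈ (univ : Finset (Fin p)).offDiag,
          {ω | 4 * q * n ≤ |∑ i, X (i, k.1) ω * X (i, k.2) ω|} := by
  rintro ω ⟨ℓ, m, hℓm, hgt⟩
  by_contra hω
  simp only [Set.mem_union, Set.mem_iUnion, Set.mem_ofPred_eq, mem_offDiag, mem_univ,
    true_and, not_or, not_exists, not_le] at hω
  have := abs_normalizedInner_le hn (hω.1 ℓ).le (hω.1 m).le (hω.2 (ℓ, m) hℓm).le
  linarith

lemma measureReal_exists_abs_normalizedInner_gt_le (hXm : ∀ k, Measurable (X k))
    (hX : iIndepFun X P) (hlaw : ∀ k, P.map (X k) = gaussianReal 0 1) (hn : 0 < n) (hp : 1 < p)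
    (hq : 8 * √(log p / n) < 1) :
    P.real {ω | ∃ ℓ m : Fin p, ℓ ≠ m ∧
        8 * √(log p / n) < |normalizedInner (fun i ↦ X (i, ℓ) ω) (fun i ↦ X (i, m) ω)|}
      ≤ p * (exp (1 / 2) / √3) ^ n + 2 / p ^ 2 := by
  have := hX.isProbabilityMeasure
  have hp' : (1 : ℝ) < p := by exact_mod_cast hp
  have hlog : 0 ≤ log p / n := div_nonneg (log_nonneg hp'.le) n.cast_nonneg
  set q := √(log p / n)
  have hq0 : 0 ≤ q := sqrt_nonneg _
  have hqn : q ^ 2 * n = log p := by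
    rw [sq_sqrt hlog, div_mul_cancel₀ _ (by positivity)]
  have hpair : ∀ k ∈ (univ : Finset (Fin p)).offDiag,
      P.real {ω | 4 * q * n ≤ |∑ i, X (i, k.1) ω * X (i, k.2) ω|} ≤ 2 * (p ^ 4 : ℝ)⁻¹ := by
    intro k hk
    refine (measureReal_abs_sum_mul_ge_le_exp hXm hX hlaw (mem_offDiag.1 hk).2.2 hq0
      (by nlinarith)).trans_eq ?_
    rw [mul_assoc, hqn, show (-4 : ℝ) * log p = -((4 : ℕ) * log p) by push_cast; ring,
      ← log_pow, exp_neg, exp_log (by positivity)]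
  calc _ ≤ _ := measureReal_mono (setOf_exists_abs_normalizedInner_gt_subset hn q)
    _ ≤ ∑ ℓ, P.real {ω | ∑ i, X (i, ℓ) ω ^ 2 ≤ n / 2} + ∑ k ∈ (univ : Finset (Fin p)).offDiag,
          P.real {ω | 4 * q * n ≤ |∑ i, X (i, k.1) ω * X (i, k.2) ω|} :=
        (measureReal_union_le _ _).trans
          (add_le_add (measureReal_iUnion_fintype_le _) (measureReal_biUnion_finset_le _ _))
    _ ≤ p * (exp (1 / 2) / √3) ^ n + (p * p : ℕ) * (2 * (p ^ 4 : ℝ)⁻¹) := by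
      gcongr
      · simpa using sum_le_card_nsmul univ _ _
          fun ℓ _ ↦ measureReal_sum_sq_le_half_le hXm hX hlaw ℓ
      · refine (sum_le_card_nsmul _ _ _ hpair).trans ?_
        rw [nsmul_eq_mul]
        gcongr
        rw [offDiag_card, card_univ, Fintype.card_fin]
        exact Nat.sub_le _ _
    _ = _ := by push_cast; field_simp

end GaussianDesign

theorem stmt_14_general {Θ : Type*} [MeasureSpace Θ] (A : ℝ) :
    ∃ C C' : ℝ, 0 < C ∧ 0 < C' ∧
      ∀ (n p : ℕ), 0 < n → 1 < p → (p : ℝ) ≤ (n : ℝ) ^ A →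
      ∀ (X : Fin n × Fin p → Θ → ℝ), (∀ i, Measurable (X i)) →
        iIndepFun X ℙ →
        (∀ i, (ℙ : Measure Θ).map (X i) = gaussianReal 0 1) →
        ENNReal.ofReal (1 - C / p) ≤
          ℙ {ω | ∀ ℓ m : Fin p, ℓ ≠ m →
            |(1 / (n : ℝ)) * ∑ i : Fin n,
              (X (i, ℓ) ω / Real.sqrt ((1 / (n : ℝ)) * ∑ j : Fin n, (X (j, ℓ) ω) ^ 2)) *
              (X (i, m) ω / Real.sqrt ((1 / (n : ℝ)) * ∑ j : Fin n, (X (j, m) ω) ^ 2))| ≤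
            C' * Real.sqrt (Real.log p / n)} := by
  obtain ⟨M, hM⟩ := exists_rpow_mul_pow_le (2 * A) (by positivity) exp_half_div_sqrt_three_lt_one
  have hM0 : 0 ≤ M := (hM 0).trans' (by positivity)
  refine ⟨M + 2, 8, by linarith, by norm_num, fun n p hn hp hpA X hXm hX hlaw ↦ ?_⟩
  have := hX.isProbabilityMeasure
  set G := {ω | ∀ ℓ m : Fin p, ℓ ≠ m →
    |normalizedInner (fun i ↦ X (i, ℓ) ω) (fun i ↦ X (i, m) ω)| ≤ 8 * √(log p / n)}
  change ENNReal.ofReal _ ≤ ℙ G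
  by_cases hq : 1 ≤ 8 * √(log p / n)
  · have hG : G = Set.univ :=
      Set.eq_univ_of_forall fun ω ℓ m _ ↦ (abs_normalizedInner_le_one hn _ _).trans hq
    rw [hG, measure_univ, ENNReal.ofReal_le_one]
    linarith [show 0 ≤ (M + 2) / p by positivity]
  have hbad := (measureReal_mono fun ω (hω : ω ∈ Gᶜ) ↦ by simpa [G] using hω).trans
    (measureReal_exists_abs_normalizedInner_gt_le hXm hX hlaw hn hp (not_le.1 hq))
  refine ENNReal.ofReal_le_of_le_toReal ?_
  calc 1 - (M + 2) / p ≤ 1 - (ℙ : Measure Θ).real Gᶜ := by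
        linarith [mul_pow_add_two_div_sq_le (by positivity) hp hpA (hM n)]
    _ ≤ (ℙ : Measure Θ).real G := one_sub_probReal_compl_le G

/-- Coherence bound for an i.i.d. standard Gaussian design: with probability at
least `1 − C/p`, the empirical coherence of the normalized columns is at most
`C'·√(log p / n)`. -/
theorem stmt_14 {Θ : Type*} [MeasureSpace Θ] (hP : IsProbabilityMeasure (ℙ : Measure Θ))
    (A : ℝ) (hA : 0 < A) :
    ∃ C C' : ℝ, 0 < C ∧ 0 < C' ∧
      ∀ (n p : ℕ), 0 < n → 1 < p → (p : ℝ) ≤ (n : ℝ) ^ A →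
      ∀ (X : Fin n × Fin p → Θ → ℝ), (∀ i, Measurable (X i)) →
        iIndepFun X ℙ →
        (∀ i, (ℙ : Measure Θ).map (X i) = gaussianReal 0 1) →
        ENNReal.ofReal (1 - C / p) ≤
          ℙ {ω | ∀ ℓ m : Fin p, ℓ ≠ m →
            |(1 / (n : ℝ)) * ∑ i : Fin n,
              (X (i, ℓ) ω / Real.sqrt ((1 / (n : ℝ)) * ∑ j : Fin n, (X (j, ℓ) ω) ^ 2)) *
              (X (i, m) ω / Real.sqrt ((1 / (n : ℝ)) * ∑ j : Fin n, (X (j, m) ω) ^ 2))| ≤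
            C' * Real.sqrt (Real.log p / n)} :=
  stmt_14_general A
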